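/- Let V = {(ρ', θ, θ') ∈ ℝ³ : ρ' > 0} and η : V → (ℝ³ →L[ℝ] ℝ) be given by η(ρ', θ, θ') (v₁, v₂, v₃) = (1/2) * (cos(θ − θ') * v₁ + ρ' * sin(θ − θ') * (v₂ + v₃)). Define dη at x ∈ V on constant vectors u, v ∈ ℝ³ by dη x u v = fderiv ℝ (fun y => η y v) x u − fderiv ℝ (fun y => η y u) x v. Then the vector field R(ρ', θ, θ') = (2 * cos(θ − θ'), 0, 2 * sin(θ − θ')/ρ') satisfies η x (R x) = 1 and dη x (R x) v = 0 for every x ∈ V and every v ∈ ℝ³; i.e. R is the Reeb vector field of the contact 1-form η obtained by scaling reduction of the 2d harmonic oscillator phase space (Example 3.4 of the paper). -/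

import Mathlib

open Real

noncomputable section

/-- The contact 1-form `η = ½(cos(θ−θ') dρ' + ρ' sin(θ−θ')(dθ + dθ'))` on
`V = {(ρ', θ, θ') : ρ' > 0}`, evaluated on a constant vector `v = (v₁, v₂, v₃)`. -/
def etaForm (x : ℝ × ℝ × ℝ) (v : ℝ × ℝ × ℝ) : ℝ :=
  (1 / 2) * (cos (x.2.1 - x.2.2) * v.1 + x.1 * sin (x.2.1 - x.2.2) * (v.2.1 + v.2.2))

/-- The exterior differential of `η` at `x`, evaluated on constant vectors `u, v`. -/
def dEta (x : ℝ × ℝ × ℝ) (u v : ℝ × ℝ × ℝ) : ℝ :=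
  fderiv ℝ (fun y => etaForm y v) x u - fderiv ℝ (fun y => etaForm y u) x v

/-- The candidate Reeb vector field `R(ρ', θ, θ') = (2 cos(θ−θ'), 0, 2 sin(θ−θ')/ρ')`. -/
def reebVF (x : ℝ × ℝ × ℝ) : ℝ × ℝ × ℝ :=
  (2 * cos (x.2.1 - x.2.2), 0, 2 * sin (x.2.1 - x.2.2) / x.1)


/-! With `φ = θ − θ'`, `dη = sin φ dρ' ∧ dθ + ρ' cos φ dθ ∧ dθ'`. Since `R` has no `dθ`-component,
`i_R dη = (R_ρ' sin φ − ρ' R_θ' cos φ) dθ = (2 cos φ sin φ − 2 sin φ cos φ) dθ = 0`, while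
`η(R) = cos² φ + sin² φ = 1`. -/

theorem fderiv_etaForm_apply (x v u : ℝ × ℝ × ℝ) :
    fderiv ℝ (fun y => etaForm y v) x u =
      (1 / 2) * (-sin (x.2.1 - x.2.2) * (u.2.1 - u.2.2) * v.1 +
        (u.1 * sin (x.2.1 - x.2.2) + x.1 * cos (x.2.1 - x.2.2) * (u.2.1 - u.2.2)) *
          (v.2.1 + v.2.2)) := by
  have hφ : HasFDerivAt (fun y : ℝ × ℝ × ℝ => y.2.1 - y.2.2)
      ((ContinuousLinearMap.fst ℝ ℝ ℝ).comp (ContinuousLinearMap.snd ℝ ℝ (ℝ × ℝ)) -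
        (ContinuousLinearMap.snd ℝ ℝ ℝ).comp (ContinuousLinearMap.snd ℝ ℝ (ℝ × ℝ))) x :=
    (hasFDerivAt_fst.comp x hasFDerivAt_snd).sub (hasFDerivAt_snd.comp x hasFDerivAt_snd)
  have hη : HasFDerivAt (fun y => etaForm y v) _ x :=
    ((hφ.cos.mul_const v.1).add ((hasFDerivAt_fst.mul hφ.sin).mul_const (v.2.1 + v.2.2))).const_mul
      (1 / 2 : ℝ)
  rw [hη.fderiv]
  simp only [smul_add, add_apply, smul_apply, sub_apply, ContinuousLinearMap.comp_apply,
    ContinuousLinearMap.coe_snd', ContinuousLinearMap.coe_fst', smul_eq_mul]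
  ring

theorem dEta_apply (x u v : ℝ × ℝ × ℝ) :
    dEta x u v = sin (x.2.1 - x.2.2) * (u.1 * v.2.1 - u.2.1 * v.1) +
      x.1 * cos (x.2.1 - x.2.2) * (u.2.1 * v.2.2 - u.2.2 * v.2.1) := by
  rw [dEta, fderiv_etaForm_apply, fderiv_etaForm_apply]
  ring

theorem etaForm_reebVF {x : ℝ × ℝ × ℝ} (hx : x.1 ≠ 0) : etaForm x (reebVF x) = 1 := by
  simp only [etaForm, reebVF]
  field_simp
  linear_combination 2 * sin_sq_add_cos_sq (x.2.1 - x.2.2)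

theorem dEta_reebVF {x : ℝ × ℝ × ℝ} (hx : x.1 ≠ 0) (v : ℝ × ℝ × ℝ) : dEta x (reebVF x) v = 0 := by
  rw [dEta_apply]
  simp only [reebVF]
  field_simp
  ring

/-- `R` is the Reeb vector field of the contact 1-form `η` obtained by
scaling reduction of the 2d harmonic oscillator phase space: `η(R) = 1` and
`i_R dη = 0`. -/
theorem reeb_of_harmonic_oscillator_contact_form :
    ∀ x : ℝ × ℝ × ℝ, 0 < x.1 →
      etaForm x (reebVF x) = 1 ∧ ∀ v : ℝ × ℝ × ℝ, dEta x (reebVF x) v = 0 :=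
  fun _ hx => ⟨etaForm_reebVF hx.ne', dEta_reebVF hx.ne'⟩
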